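/- Let T be a noncrossing tree on [n] containing the edge {i,k} with i < k, and let s(T) be its signature. Then for every j with i < j < k, s_j ≥ s_i. Moreover, if the unique path from j to k in T does not contain i, then s_j ≥ s_i + 1. -/

import Mathlib

attribute [local instance 2000] Classical.propDecidable

/-- A graph on `Fin n` is noncrossing if it has no pair of edges `{a,c}` and `{b,d}`
with `a < b < c < d`. -/
def Noncrossing {n : ℕ} (G : SimpleGraph (Fin n)) : Prop :=
  ∀ a b c d : Fin n, a < b → b < c → c < d → G.Adj a c → G.Adj b d → False

/-- The signature of a noncrossing tree on `Fin n` (vertices `0, 1, ..., n-1`):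
`s 0 = 1`; and for `i > 0`, `s i = s j` where `j < i` is minimal with `{j,i}` an edge,
if such a `j` exists, and otherwise `s i = s (i-1) + 1`. -/
noncomputable def signature {n : ℕ} (T : SimpleGraph (Fin n)) : ℕ → ℕ
  | 0 => 1
  | (i+1) =>
    if h : ∃ j, j ≤ i ∧ ∃ (h1 : j < n) (h2 : i + 1 < n), T.Adj ⟨j, h1⟩ ⟨i + 1, h2⟩ then
      signature T (Nat.find h)
    else
      signature T i + 1
termination_by i => i
decreasing_by
  · exact Nat.lt_succ_of_le (Nat.find_spec h).1
  · exact Nat.lt_succ_self i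

/-!
Strong induction on `j`. If `j` has a left neighbour, then `s_j = s_m` for one such `m`, and
`m ≥ i` because `{m, j}` may not cross `{i, k}`; otherwise `s_j = s_{j-1} + 1` with
`j - 1 ≥ i`. For the strict bound, `m = i` cannot occur when the path from `j` to `k` avoids
`i`, since `j, i, k` would be a second path; and in the second case the weak bound for `j - 1`
already gives it.
-/

theorem SimpleGraph.IsAcyclic.mem_support_of_adj_of_adj {V : Type*} {G : SimpleGraph V}
    (hG : G.IsAcyclic) {u w v : V} (huw : G.Adj u w) (hwv : G.Adj w v) (huv : u ≠ v)
    (p : G.Walk u v) (hp : p.IsPath) : w ∈ p.support := by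
  let q : G.Walk u v := .cons huw (.cons hwv .nil)
  have hq : q.IsPath := by
    simp [q, SimpleGraph.Walk.isPath_def, huv, huw.ne, hwv.ne]
  have hpq : p = q := congrArg Subtype.val ((hG.subsingleton_path u v).elim ⟨p, hp⟩ ⟨q, hq⟩)
  simp [hpq, q]

section Signature

variable {n : ℕ} {T : SimpleGraph (Fin n)}

theorem exists_adj_signature_eq {j : Fin n} (h : ∃ m < j, T.Adj m j) :
    ∃ m < j, T.Adj m j ∧ signature T j = signature T m := by
  obtain ⟨_ | w, hj⟩ := j
  · obtain ⟨m, hm, -⟩ := h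
    exact absurd (Fin.lt_def.mp hm) (Nat.not_lt_zero _)
  · have hex : ∃ m, m ≤ w ∧ ∃ (h1 : m < n) (h2 : w + 1 < n), T.Adj ⟨m, h1⟩ ⟨w + 1, h2⟩ := by
      obtain ⟨m, hm, hadj⟩ := h
      exact ⟨m, Nat.le_of_lt_succ hm, m.isLt, hj, hadj⟩
    obtain ⟨hmw, hm, _, hadj⟩ := Nat.find_spec hex
    refine ⟨⟨Nat.find hex, hm⟩, Nat.lt_succ_of_le hmw, hadj, ?_⟩
    show signature T (w + 1) = _
    rw [signature, dif_pos hex]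

theorem exists_ge_signature_eq_succ {i j : Fin n} (hij : i < j) (h : ∀ m < j, ¬T.Adj m j) :
    ∃ j' < j, i ≤ j' ∧ signature T j = signature T j' + 1 := by
  obtain ⟨_ | w, hjn⟩ := j
  · exact absurd (Fin.lt_def.mp hij) (Nat.not_lt_zero _)
  · refine ⟨⟨w, Nat.lt_of_succ_lt hjn⟩, Nat.lt_succ_self w, Nat.le_of_lt_succ hij, ?_⟩
    show signature T (w + 1) = signature T w + 1
    rw [signature, dif_neg]
    rintro ⟨m, hmw, hm, _, hadj⟩
    exact h ⟨m, hm⟩ (Nat.lt_succ_of_le hmw) hadj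

variable {i k : Fin n}

theorem Noncrossing.le_of_adj_of_lt_of_lt (hnc : Noncrossing T) (hik : T.Adj i k) {m j : Fin n}
    (hij : i < j) (hjk : j < k) (hmj : T.Adj m j) : i ≤ m :=
  le_of_not_gt fun hmi => hnc m i j k hmi hij hjk hmj hik

theorem signature_le_of_adj_of_lt_of_lt (hnc : Noncrossing T) (hik : T.Adj i k) (j : Fin n) :
    i < j → j < k → signature T i ≤ signature T j := by
  induction j using WellFoundedLT.induction with
  | _ j ih =>
    intro hij hjk
    by_cases hleft : ∃ m < j, T.Adj m j
    · obtain ⟨m, hmj, hmadj, hsig⟩ := exists_adj_signature_eq hleft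
      rw [hsig]
      rcases (hnc.le_of_adj_of_lt_of_lt hik hij hjk hmadj).eq_or_lt with rfl | him
      · rfl
      · exact ih m hmj him (hmj.trans hjk)
    · push Not at hleft
      obtain ⟨j', hj'j, hij', hsig⟩ := exists_ge_signature_eq_succ hij hleft
      rw [hsig]
      rcases hij'.eq_or_lt with rfl | hij'
      · exact Nat.le_succ _
      · exact (ih j' hj'j hij' (hj'j.trans hjk)).trans (Nat.le_succ _)

theorem signature_lt_of_adj_of_isPath_not_mem (hT : T.IsAcyclic) (hnc : Noncrossing T)
    (hik : T.Adj i k) (j : Fin n) : i < j → j < k →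
    ∀ p : T.Walk j k, p.IsPath → i ∉ p.support → signature T i + 1 ≤ signature T j := by
  induction j using WellFoundedLT.induction with
  | _ j ih =>
    intro hij hjk p hp hip
    by_cases hleft : ∃ m < j, T.Adj m j
    · obtain ⟨m, hmj, hmadj, hsig⟩ := exists_adj_signature_eq hleft
      rw [hsig]
      rcases (hnc.le_of_adj_of_lt_of_lt hik hij hjk hmadj).eq_or_lt with rfl | him
      · exact absurd (hT.mem_support_of_adj_of_adj hmadj.symm hik hjk.ne p hp) hip
      · have hiq : i ∉ (p.cons hmadj).bypass.support := fun hi => by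
          rcases List.mem_cons.mp ((p.cons hmadj).support_bypass_subset_support hi) with rfl | hi
          · exact him.ne rfl
          · exact hip hi
        exact ih m hmj him (hmj.trans hjk) _ (p.cons hmadj).bypass_isPath hiq
    · push Not at hleft
      obtain ⟨j', hj'j, hij', hsig⟩ := exists_ge_signature_eq_succ hij hleft
      rw [hsig]
      rcases hij'.eq_or_lt with rfl | hij'
      · rfl
      · exact Nat.succ_le_succ (signature_le_of_adj_of_lt_of_lt hnc hik j' hij' (hj'j.trans hjk))

end Signature

theorem signature_ge_of_edge_general {n : ℕ} (T : SimpleGraph (Fin n))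
    (hT : T.IsTree) (hnc : Noncrossing T) (i k : Fin n) (hadj : T.Adj i k) :
    ∀ j : Fin n, i < j → j < k →
      (signature T i.val ≤ signature T j.val) ∧
      (∀ p : T.Walk j k, p.IsPath → i ∉ p.support →
        signature T i.val + 1 ≤ signature T j.val) := fun j hij hjk =>
  ⟨signature_le_of_adj_of_lt_of_lt hnc hadj j hij hjk,
    signature_lt_of_adj_of_isPath_not_mem hT.isAcyclic hnc hadj j hij hjk⟩

/-- If `{i,k}` with `i < k` is an edge of a noncrossing tree `T`, then `s j ≥ s i` for all
`i < j < k`; moreover if the unique path from `j` to `k` in `T` does not contain `i`,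
then `s j ≥ s i + 1`. -/
theorem signature_ge_of_edge {n : ℕ} (T : SimpleGraph (Fin n))
    (hT : T.IsTree) (hnc : Noncrossing T) (i k : Fin n) (hik : i < k) (hadj : T.Adj i k) :
    ∀ j : Fin n, i < j → j < k →
      (signature T i.val ≤ signature T j.val) ∧
      (∀ p : T.Walk j k, p.IsPath → i ∉ p.support →
        signature T i.val + 1 ≤ signature T j.val) :=
  signature_ge_of_edge_general T hT hnc i k hadj
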